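/- Let u be a form satisfying H_q(Φ u) + Ψ u + B(x^{-1} u (h_q u)) = 0, and let a ∈ ℂ, a ≠ 0. Then the shifted form û = h_{a^{-1}} u satisfies H_q(Φ̂ û) + Ψ̂ û + B̂(x^{-1} û (h_q û)) = 0, where Φ̂(x) = a^{-deg Φ} Φ(ax), Ψ̂(x) = a^{1-deg Φ} Ψ(ax), and B̂(x) = a^{-deg Φ} B(ax). -/

import Mathlib

open Polynomial

noncomputable section

namespace QLH

/-- A *form*: a linear functional on ℂ[x]. -/
abbrev PForm : Type := Polynomial ℂ →ₗ[ℂ] ℂ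

private lemma divByMonic_add (d f g : Polynomial ℂ) (hd : d.Monic) :
    (f + g) /ₘ d = f /ₘ d + g /ₘ d := by
  apply mul_left_cancel₀ hd.ne_zero
  have h1 : d * (f /ₘ d) = f - f %ₘ d := by
    rw [Polynomial.modByMonic_eq_sub_mul_div f d]; ring
  have h2 : d * (g /ₘ d) = g - g %ₘ d := by
    rw [Polynomial.modByMonic_eq_sub_mul_div g d]; ring
  have h3 : d * ((f + g) /ₘ d) = (f + g) - (f + g) %ₘ d := by
    rw [Polynomial.modByMonic_eq_sub_mul_div (f + g) d]; ring
  rw [mul_add, h1, h2, h3, Polynomial.add_modByMonic]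
  ring

private lemma divByMonic_smul (d f : Polynomial ℂ) (a : ℂ) (hd : d.Monic) :
    (a • f) /ₘ d = a • (f /ₘ d) := by
  apply mul_left_cancel₀ hd.ne_zero
  have h1 : d * (f /ₘ d) = f - f %ₘ d := by
    rw [Polynomial.modByMonic_eq_sub_mul_div f d]; ring
  have h3 : d * ((a • f) /ₘ d) = (a • f) - (a • f) %ₘ d := by
    rw [Polynomial.modByMonic_eq_sub_mul_div (a • f) d]; ring
  rw [h3, Polynomial.smul_modByMonic, mul_smul_comm, h1, smul_sub]

/-- `(h_a f)(x) = f (a x)`. -/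
def hP (a : ℂ) : Polynomial ℂ →ₗ[ℂ] Polynomial ℂ :=
  (Polynomial.aeval (Polynomial.C a * Polynomial.X : Polynomial ℂ)).toLinearMap

/-- `(θ_c f)(x) = (f(x) - f(c))/(x - c)`. -/
def thetaP (c : ℂ) : Polynomial ℂ →ₗ[ℂ] Polynomial ℂ where
  toFun f := (f - C (f.eval c)) /ₘ (X - C c)
  map_add' f g := by
    have h : f + g - C ((f + g).eval c)
        = (f - C (f.eval c)) + (g - C (g.eval c)) := by
      simp only [eval_add, C_add]; ring
    rw [h, divByMonic_add _ _ _ (monic_X_sub_C c)]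
  map_smul' a f := by
    have h : a • f - C ((a • f).eval c) = a • (f - C (f.eval c)) := by
      simp only [eval_smul, smul_eq_mul, smul_sub, Polynomial.smul_C]
    rw [h, divByMonic_smul _ _ _ (monic_X_sub_C c)]
    rfl

/-- `(H_q f)(x) = (f(qx) - f(x))/((q-1)x)`. -/
def HqP (q : ℂ) : Polynomial ℂ →ₗ[ℂ] Polynomial ℂ :=
  (q - 1)⁻¹ • (thetaP 0 ∘ₗ (hP q - LinearMap.id))

/-- `⟨h_a u, f⟩ = ⟨u, h_a f⟩`. -/
def hF (a : ℂ) (u : PForm) : PForm := u ∘ₗ hP a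

/-- `⟨H_q u, f⟩ = -⟨u, H_q f⟩`. -/
def HqF (q : ℂ) (u : PForm) : PForm := -(u ∘ₗ HqP q)

/-- `⟨g u, f⟩ = ⟨u, g f⟩`. -/
def mF (g : Polynomial ℂ) (u : PForm) : PForm := u ∘ₗ LinearMap.mulLeft ℂ g

/-- `⟨(x - c)⁻¹ u, f⟩ = ⟨u, θ_c f⟩`. -/
def divF (c : ℂ) (u : PForm) : PForm := u ∘ₗ thetaP c

/-- The Dirac form `δ_c`. -/
def deltaF (c : ℂ) : PForm := Polynomial.leval c

/-- Kernel used in the left product of a form by a polynomial. -/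
def kern (u : PForm) (j : ℕ) : Polynomial ℂ :=
  ∑ i ∈ Finset.range (j + 1), C (u (X ^ (j - i))) * X ^ i

/-- The left product `f ↦ u f`, `(uf)(x) = ⟨u_ζ, (x f(x) - ζ f(ζ))/(x - ζ)⟩`. -/
def lmul (u : PForm) : Polynomial ℂ →ₗ[ℂ] Polynomial ℂ where
  toFun f := f.sum fun j a => a • kern u j
  map_add' f g :=
    Polynomial.sum_add_index f g _ (fun i => zero_smul ℂ _) fun i b₁ b₂ => add_smul b₁ b₂ _
  map_smul' a f := by
    rw [Polynomial.sum_smul_index f a (fun j b => b • kern u j) fun i => zero_smul ℂ _]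
    simp only [Polynomial.sum_def, mul_smul, ← Finset.smul_sum]
    rfl

/-- The Cauchy product of two forms: `⟨uv, f⟩ = ⟨u, v f⟩`. -/
def cF (u v : PForm) : PForm := u ∘ₗ lmul v

/-- The q-difference equation `H_q(Φu) + Ψu + B(x⁻¹ u (h_q u)) = 0`. -/
def LHeq (q : ℂ) (u : PForm) (Φ Ψ B : Polynomial ℂ) : Prop :=
  HqF q (mF Φ u) + mF Ψ u + mF B (divF 0 (cF u (hF q u))) = 0

/-- A form is regular when it possesses a MOPS. -/
def IsRegular (u : PForm) : Prop :=
  ∃ P : ℕ → Polynomial ℂ, (∀ n, (P n).Monic) ∧ (∀ n, (P n).natDegree = n) ∧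
    (∀ n, u (P n * P n) ≠ 0) ∧ ∀ m n, m ≠ n → u (P m * P n) = 0

/-- A regular form is q-semiclassical when it satisfies `H_q(Φu) + Ψu = 0`, `Φ` monic. -/
def IsSemiclassical (q : ℂ) (u : PForm) : Prop :=
  IsRegular u ∧ ∃ Φ Ψ : Polynomial ℂ, Φ.Monic ∧ HqF q (mF Φ u) + mF Ψ u = 0

/-- A regular form is q-Laguerre–Hahn when it satisfies some equation `LHeq`. -/
def IsLaguerreHahn (q : ℂ) (u : PForm) : Prop :=
  IsRegular u ∧ ∃ Φ Ψ B : Polynomial ℂ, Φ.Monic ∧ LHeq q u Φ Ψ B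

/-- `u` is of class `s`: `s` is the minimum of `max (deg Ψ - 1) (max (deg Φ) (deg B) - 2)`
over all q-difference equations `LHeq q u Φ Ψ B` (`Φ` monic) satisfied by `u`. -/
def HasClass (q : ℂ) (u : PForm) (s : ℕ) : Prop :=
  (∃ Φ Ψ B : Polynomial ℂ, Φ.Monic ∧ LHeq q u Φ Ψ B ∧
      Φ.natDegree ≤ s + 2 ∧ B.natDegree ≤ s + 2 ∧ Ψ.natDegree ≤ s + 1) ∧
  ∀ t : ℕ, (∃ Φ Ψ B : Polynomial ℂ, Φ.Monic ∧ LHeq q u Φ Ψ B ∧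
      Φ.natDegree ≤ t + 2 ∧ B.natDegree ≤ t + 2 ∧ Ψ.natDegree ≤ t + 1) → s ≤ t

/-- Formal Stieltjes series `S(u)(z) = -∑ (u)_n z^{-n-1}`, as a formal Laurent
series in the variable `T = z⁻¹`. -/
def Sf (u : PForm) : LaurentSeries ℂ :=
  HahnSeries.ofPowerSeries ℤ ℂ (PowerSeries.mk fun n => if n = 0 then 0 else -u (X ^ (n - 1)))

/-- A polynomial `f(z)`, viewed as a formal Laurent series in `T = z⁻¹`. -/
def toLS (f : Polynomial ℂ) : LaurentSeries ℂ :=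
  ∑ j ∈ Finset.range (f.natDegree + 1), HahnSeries.single (-(j : ℤ)) (f.coeff j)

/-- The Laurent series `z` (in the variable `T = z⁻¹`). -/
def zLS : LaurentSeries ℂ := HahnSeries.single (-1 : ℤ) 1

/-- `(h_a F)(z) = F(az)` on formal Laurent series in `T = z⁻¹`. -/
def hLS (a : ℂ) (F : LaurentSeries ℂ) : LaurentSeries ℂ where
  coeff := fun k => a ^ (-k) * F.coeff k
  isPWO_support' := F.isPWO_support'.mono fun k hk => by
    simp only [Function.mem_support] at hk ⊢
    exact fun h => hk (by rw [h, mul_zero])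

/-- `(H_q F)(z) = (F(qz) - F(z))/((q-1)z)` on formal Laurent series in `T = z⁻¹`. -/
def HqLS (q : ℂ) (F : LaurentSeries ℂ) : LaurentSeries ℂ :=
  HahnSeries.single (1 : ℤ) ((q - 1)⁻¹) * (hLS q F - F)

/- Dilation `f ↦ f(a·)` intertwines every operation of the equation up to a power of `a`:
`H_q` and `x⁻¹` each pick up one factor `a`, multiplication by `g` turns into multiplication
by `g(a·)`, and the Cauchy product commutes with dilation. So the left side of the equation
for `û` with coefficients `Φ(a·), aΨ(a·), B(a·)` is `a` times the dilate of the left side for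
`u`; the extra factor `a^{-deg Φ}` only keeps `Φ̂` monic. -/

lemma coeff_hP (a : ℂ) (f : ℂ[X]) (n : ℕ) : (hP a f).coeff n = a ^ n * f.coeff n := by
  rw [hP, AlgHom.toLinearMap_apply, ← comp_eq_aeval, comp_C_mul_X_coeff, mul_comm]

lemma hP_hP (a b : ℂ) (f : ℂ[X]) : hP b (hP a f) = hP (a * b) f := by
  ext n
  simp only [coeff_hP, mul_pow]
  ring

lemma hP_inv_hP {a : ℂ} (ha : a ≠ 0) (f : ℂ[X]) : hP a⁻¹ (hP a f) = f := by
  ext n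
  rw [coeff_hP, coeff_hP, ← mul_assoc, ← mul_pow, inv_mul_cancel₀ ha, one_pow, one_mul]

lemma hP_mul (a : ℂ) (f g : ℂ[X]) : hP a (f * g) = hP a f * hP a g :=
  map_mul (aeval (C a * X)) f g

lemma thetaP_zero_eq_divX (f : ℂ[X]) : thetaP 0 f = divX f := by
  refine mul_left_cancel₀ (X_ne_zero (R := ℂ)) ?_
  have hθ : (X - C 0) * thetaP 0 f = f - C (f.eval 0) :=
    mul_divByMonic_eq_iff_isRoot.2 (by simp)
  rw [C_0, sub_zero] at hθ
  rw [hθ, ← coeff_zero_eq_eval_zero, sub_eq_iff_eq_add, mul_comm, divX_mul_X_add]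

lemma thetaP_zero_hP (a : ℂ) (f : ℂ[X]) : thetaP 0 (hP a f) = a • hP a (thetaP 0 f) := by
  ext n
  simp only [thetaP_zero_eq_divX, coeff_divX, coeff_smul, coeff_hP, smul_eq_mul, pow_succ]
  ring

lemma HqP_hP (q a : ℂ) (f : ℂ[X]) : HqP q (hP a f) = a • hP a (HqP q f) := by
  simp only [HqP, LinearMap.smul_apply, LinearMap.comp_apply, LinearMap.sub_apply,
    LinearMap.id_apply, map_smul]
  rw [hP_hP, mul_comm, ← hP_hP, ← map_sub, thetaP_zero_hP, smul_comm]

lemma hP_monomial (b : ℂ) (n : ℕ) (c : ℂ) : hP b (monomial n c) = monomial n (b ^ n * c) := by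
  ext k
  simp only [coeff_hP, coeff_monomial]
  split_ifs with hk
  · rw [hk]
  · rw [mul_zero]

lemma hF_X_pow (b : ℂ) (v : PForm) (n : ℕ) : hF b v (X ^ n) = b ^ n * v (X ^ n) := by
  rw [hF, LinearMap.comp_apply, X_pow_eq_monomial, hP_monomial, ← smul_eq_mul,
    ← smul_monomial, map_smul, smul_eq_mul]

lemma hP_kern_hF (b : ℂ) (v : PForm) (n : ℕ) :
    hP b (kern (hF b v) n) = b ^ n • kern v n := by
  rw [kern, kern, map_sum, Finset.smul_sum]
  refine Finset.sum_congr rfl fun i hi => ?_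
  have hin : i + (n - i) = n := Nat.add_sub_cancel' (Nat.lt_succ_iff.1 (Finset.mem_range.1 hi))
  rw [C_mul_X_pow_eq_monomial, C_mul_X_pow_eq_monomial, hP_monomial, hF_X_pow, smul_monomial,
    smul_eq_mul, ← mul_assoc, ← pow_add, hin]

lemma lmul_monomial (v : PForm) (n : ℕ) (c : ℂ) : lmul v (monomial n c) = c • kern v n :=
  sum_monomial_index c (fun j a => a • kern v j) (zero_smul ℂ _)

lemma hP_lmul_hF (b : ℂ) (v : PForm) (g : ℂ[X]) :
    hP b (lmul (hF b v) g) = lmul v (hP b g) := by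
  induction g using Polynomial.induction_on' with
  | add f g hf hg => simp only [map_add, hf, hg]
  | monomial n c =>
    rw [lmul_monomial, map_smul, hP_kern_hF, hP_monomial, lmul_monomial, smul_smul, mul_comm]

lemma hF_add (a : ℂ) (u v : PForm) : hF a (u + v) = hF a u + hF a v :=
  LinearMap.add_comp _ _ _

lemma hF_zero (a : ℂ) : hF a 0 = 0 :=
  LinearMap.zero_comp _

lemma hF_hF_comm (a b : ℂ) (u : PForm) : hF a (hF b u) = hF b (hF a u) :=
  LinearMap.ext fun f => by simp only [hF, LinearMap.comp_apply, hP_hP, mul_comm]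

lemma mF_smul_left (c : ℂ) (g : ℂ[X]) (u : PForm) : mF (c • g) u = c • mF g u :=
  LinearMap.ext fun f => by simp [mF]

lemma mF_smul_right (g : ℂ[X]) (c : ℂ) (u : PForm) : mF g (c • u) = c • mF g u :=
  LinearMap.smul_comp _ _ _

lemma HqF_smul (q c : ℂ) (u : PForm) : HqF q (c • u) = c • HqF q u := by
  simp only [HqF, LinearMap.smul_comp, smul_neg]

lemma mF_hF (g : ℂ[X]) (b : ℂ) (u : PForm) : mF g (hF b u) = hF b (mF (hP b g) u) :=
  LinearMap.ext fun f => by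
    simp only [mF, hF, LinearMap.comp_apply, LinearMap.mulLeft_apply, hP_mul]

lemma hF_HqF (a q : ℂ) (u : PForm) : hF a (HqF q u) = a • HqF q (hF a u) :=
  LinearMap.ext fun f => by
    simp only [hF, HqF, LinearMap.comp_apply, LinearMap.neg_apply, LinearMap.smul_apply,
      HqP_hP, map_smul, smul_neg]

lemma hF_divF (a : ℂ) (u : PForm) : hF a (divF 0 u) = a • divF 0 (hF a u) :=
  LinearMap.ext fun f => by
    simp only [hF, divF, LinearMap.comp_apply, LinearMap.smul_apply, thetaP_zero_hP, map_smul]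

lemma cF_hF_hF (b : ℂ) (u v : PForm) : cF (hF b u) (hF b v) = hF b (cF u v) :=
  LinearMap.ext fun f => congrArg u (hP_lmul_hF b v f)

lemma mF_hP_hF_inv {a : ℂ} (ha : a ≠ 0) (g : ℂ[X]) (u : PForm) :
    mF (hP a g) (hF a⁻¹ u) = hF a⁻¹ (mF g u) := by
  rw [mF_hF, hP_inv_hP ha]

lemma HqF_hF_inv {a : ℂ} (ha : a ≠ 0) (q : ℂ) (u : PForm) :
    HqF q (hF a⁻¹ u) = a • hF a⁻¹ (HqF q u) := by
  rw [hF_HqF, smul_smul, mul_inv_cancel₀ ha, one_smul]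

lemma divF_hF_inv {a : ℂ} (ha : a ≠ 0) (u : PForm) :
    divF 0 (hF a⁻¹ u) = a • hF a⁻¹ (divF 0 u) := by
  rw [hF_divF, smul_smul, mul_inv_cancel₀ ha, one_smul]

lemma LHeq.smul {q : ℂ} {u : PForm} {Φ Ψ B : ℂ[X]} (h : LHeq q u Φ Ψ B) (c : ℂ) :
    LHeq q u (c • Φ) (c • Ψ) (c • B) := by
  unfold LHeq at h ⊢
  rw [mF_smul_left, mF_smul_left, mF_smul_left, HqF_smul, ← smul_add, ← smul_add, h, smul_zero]

lemma LHeq.hF_inv {q a : ℂ} (ha : a ≠ 0) {u : PForm} {Φ Ψ B : ℂ[X]} (h : LHeq q u Φ Ψ B) :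
    LHeq q (hF a⁻¹ u) (hP a Φ) (a • hP a Ψ) (hP a B) := by
  unfold LHeq at h ⊢
  rw [hF_hF_comm q, cF_hF_hF, divF_hF_inv ha, mF_smul_left, mF_smul_right, mF_hP_hF_inv ha,
    mF_hP_hF_inv ha, mF_hP_hF_inv ha, HqF_hF_inv ha, ← smul_add, ← smul_add, ← hF_add,
    ← hF_add, h, hF_zero, smul_zero]

theorem shifted_LHeq_general (q : ℂ)
    (a : ℂ) (ha : a ≠ 0) (u : PForm) (Φ Ψ B : Polynomial ℂ)
    (heq : LHeq q u Φ Ψ B) :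
    LHeq q (hF a⁻¹ u)
      (a ^ (-(Φ.natDegree : ℤ)) • hP a Φ)
      (a ^ (1 - (Φ.natDegree : ℤ)) • hP a Ψ)
      (a ^ (-(Φ.natDegree : ℤ)) • hP a B) := by
  have h := (heq.hF_inv ha).smul (a ^ (-(Φ.natDegree : ℤ)))
  rwa [smul_smul, ← zpow_add_one₀ ha, neg_add_eq_sub] at h

/-- the shifted form `û = h_{a⁻¹}u` satisfies the shifted
q-difference equation. -/
theorem shifted_LHeq (q : ℂ) (hq0 : q ≠ 0) (hq : ∀ n : ℕ, 1 ≤ n → q ^ n ≠ 1)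
    (a : ℂ) (ha : a ≠ 0) (u : PForm) (Φ Ψ B : Polynomial ℂ) (hΦ : Φ.Monic)
    (heq : LHeq q u Φ Ψ B) :
    LHeq q (hF a⁻¹ u)
      (a ^ (-(Φ.natDegree : ℤ)) • hP a Φ)
      (a ^ (1 - (Φ.natDegree : ℤ)) • hP a Ψ)
      (a ^ (-(Φ.natDegree : ℤ)) • hP a B) :=
  shifted_LHeq_general q a ha u Φ Ψ B heq

end QLH

end
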